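/- Let D be a minimal counterexample and C its Hamilton cycle with the stated domination property. Then for every two vertices x and y of D with y ≠ x and y ≠ x^-, the vertex x monochromatically dominates y within the subtournament of D induced on the vertex set of the directed subpath xCy of C from x to y. -/

import Mathlib

/-- A 3-coloured tournament on vertex type `V`: between any two distinct
vertices there is exactly one directed edge (`beats`), and `colour x y` gives
the colour (one of three: red, blue, green) of the edge from `x` to `y`
(meaningful when `beats x y` holds). -/
structure CTournament (V : Type*) where
  beats : V → V → Prop
  irrefl : ∀ v, ¬ beats v v
  asymm : ∀ v w, beats v w → ¬ beats w v
  total : ∀ v w, v ≠ w → beats v w ∨ beats w v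
  colour : V → V → Fin 3

namespace CTournament

/-- The colour red. -/
def red : Fin 3 := 0
/-- The colour blue. -/
def blue : Fin 3 := 1
/-- The colour green. -/
def green : Fin 3 := 2

variable {V : Type*} (T : CTournament V)

/-- `x` monochromatically dominates `y` in colour `c`: there is a directed
path (with at least one edge) from `x` to `y` all of whose edges have
colour `c`. -/
def Dom (c : Fin 3) (x y : V) : Prop :=
  Relation.TransGen (fun a b => T.beats a b ∧ T.colour a b = c) x y

/-- `x` monochromatically dominates `y` (in some colour). -/
def MDom (x y : V) : Prop := ∃ c, T.Dom c x y

/-- `x` monochromatically dominates `y` in colour `c` within the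
subtournament induced on the vertex set `S`. -/
def DomIn (S : Set V) (c : Fin 3) (x y : V) : Prop :=
  Relation.TransGen (fun a b => a ∈ S ∧ b ∈ S ∧ T.beats a b ∧ T.colour a b = c) x y

/-- `x` monochromatically dominates `y` within the subtournament induced on `S`. -/
def MDomIn (S : Set V) (x y : V) : Prop := ∃ c, T.DomIn S c x y

/-- `T` contains a `T_3`: three vertices spanning a cyclic triangle whose
three edges have three pairwise distinct colours. -/
def HasT3 : Prop :=
  ∃ a b c : V, T.beats a b ∧ T.beats b c ∧ T.beats c a ∧
    T.colour a b ≠ T.colour b c ∧ T.colour b c ≠ T.colour c a ∧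
    T.colour a b ≠ T.colour c a

/-- Vertex `v` is incident with an edge of colour `c`. -/
def IncidentColour (v : V) (c : Fin 3) : Prop :=
  ∃ w, (T.beats v w ∧ T.colour v w = c) ∨ (T.beats w v ∧ T.colour w v = c)

/-- `T` is a minimal counterexample: it contains no `T_3`, no vertex
monochromatically dominates every other vertex, and every proper nonempty
subset of the vertices spans a subtournament containing a vertex that
monochromatically dominates (within that subtournament) every other vertex
of the subset. -/
def MinimalCex : Prop :=
  ¬ T.HasT3 ∧
  (¬ ∃ x : V, ∀ y, y ≠ x → T.MDom x y) ∧
  ∀ S : Set V, S.Nonempty → S ≠ Set.univ →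
    ∃ x ∈ S, ∀ y ∈ S, y ≠ x → T.MDomIn S x y

/-- The permutation `σ` (sending every vertex to its successor) is a directed
Hamilton cycle of `T`: every vertex beats its successor, and all vertices lie
on a single cycle of `σ`. -/
def IsHamCycle (σ : Equiv.Perm V) : Prop :=
  (∀ v, T.beats v (σ v)) ∧ ∀ v w : V, ∃ n : ℕ, (⇑σ)^[n] v = w

/-- The domination property of the Hamilton cycle `σ`: every vertex
monochromatically dominates every vertex other than itself and its
predecessor on the cycle, and no vertex monochromatically dominates its
predecessor. -/
def HamDomProp (σ : Equiv.Perm V) : Prop :=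
  (∀ x y : V, y ≠ x → y ≠ σ.symm x → T.MDom x y) ∧
  ∀ x : V, ¬ T.MDom x (σ.symm x)

/-- The vertex set of the directed subpath `xCy` of the Hamilton cycle whose
successor permutation is `σ`: all vertices reachable from `x` along the cycle
no later than the first visit of `y`. -/
def PathSet (σ : Equiv.Perm V) (x y : V) : Set V :=
  {z | ∃ k : ℕ, (⇑σ)^[k] x = z ∧ ∀ j < k, (⇑σ)^[j] x ≠ y}

/-- `R^+(x)`: the vertices to which `x` sends a red edge. -/
def Rplus (x : V) : Set V := {v | T.beats x v ∧ T.colour x v = red}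
/-- `R^-(x)`: the vertices from which `x` receives a red edge. -/
def Rminus (x : V) : Set V := {v | T.beats v x ∧ T.colour v x = red}
/-- `B^+(x)`: the vertices to which `x` sends a blue edge. -/
def Bplus (x : V) : Set V := {v | T.beats x v ∧ T.colour x v = blue}
/-- `B^-(x)`: the vertices from which `x` receives a blue edge. -/
def Bminus (x : V) : Set V := {v | T.beats v x ∧ T.colour v x = blue}
/-- `R_r^+(x) = {v ∈ R^+(x) : v monochromatically dominates x in red}`. -/
def Rrplus (x : V) : Set V := {v ∈ T.Rplus x | T.Dom red v x}
/-- `R_r^-(x) = {v ∈ R^-(x) : x monochromatically dominates v in red}`. -/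
def Rrminus (x : V) : Set V := {v ∈ T.Rminus x | T.Dom red x v}
/-- `B_b^+(x) = {v ∈ B^+(x) : v monochromatically dominates x in blue}`. -/
def Bbplus (x : V) : Set V := {v ∈ T.Bplus x | T.Dom blue v x}
/-- `B_b^-(x) = {v ∈ B^-(x) : x monochromatically dominates v in blue}`. -/
def Bbminus (x : V) : Set V := {v ∈ T.Bminus x | T.Dom blue x v}

end CTournament

/-!
The subpath `S = xCy` contains `x` and `y` but not `x⁻` (the walk from `x` meets `y` before
coming back to `x⁻`), so by minimality some `z ∈ S` dominates all of `S` within `S`. Every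
`z ∈ S` other than `x` has its predecessor `z⁻` in `S`; since no vertex dominates its
predecessor, `z = x`, and in particular `x` dominates `y` within `S`.
-/

namespace CTournament

variable {V : Type*}

section PathSet

variable {σ : Equiv.Perm V} {x y z : V}

theorem self_mem_pathSet : x ∈ PathSet σ x y :=
  ⟨0, rfl, fun _ hj => absurd hj (Nat.not_lt_zero _)⟩

theorem mem_pathSet_of_iterate_eq {n : ℕ} (hn : (⇑σ)^[n] x = y) : y ∈ PathSet σ x y := by
  classical
  have hex : ∃ n, (⇑σ)^[n] x = y := ⟨n, hn⟩
  exact ⟨Nat.find hex, Nat.find_spec hex, fun _ hj => Nat.find_min hex hj⟩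

theorem symm_mem_pathSet (hz : z ∈ PathSet σ x y) (hzx : z ≠ x) : σ.symm z ∈ PathSet σ x y := by
  obtain ⟨_ | k, rfl, hmiss⟩ := hz
  · exact absurd rfl hzx
  · refine ⟨k, ?_, fun j hj => hmiss j (hj.trans k.lt_succ_self)⟩
    rw [Equiv.eq_symm_apply, ← Function.iterate_succ_apply' σ]

theorem symm_notMem_pathSet {m : ℕ} (hm : (⇑σ)^[m] x = y) (hy : y ≠ σ.symm x) :
    σ.symm x ∉ PathSet σ x y := by
  rintro ⟨k, hk, hmiss⟩
  have hper : Function.IsPeriodicPt σ (k + 1) x := by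
    rw [Function.IsPeriodicPt, Function.IsFixedPt, Function.iterate_succ_apply', hk,
      Equiv.apply_symm_apply]
  have hmod : (⇑σ)^[m % (k + 1)] x = y := (hper.iterate_mod_apply m).trans hm
  have hlt : m % (k + 1) < k + 1 := Nat.mod_lt _ k.succ_pos
  have hne : m % (k + 1) ≠ k := fun heq => hy (by rw [← hmod, heq, hk])
  exact hmiss _ (by omega) hmod

end PathSet

theorem symm_apply_ne_self_of_reachable {σ : Equiv.Perm V}
    (hreach : ∀ v w : V, ∃ n : ℕ, (⇑σ)^[n] v = w) {x z : V} (hzx : z ≠ x) : σ.symm z ≠ z := by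
  intro hfix
  obtain ⟨n, hn⟩ := hreach z x
  rw [Function.iterate_fixed (σ.symm_apply_eq.mp hfix).symm] at hn
  exact hzx hn

variable (T : CTournament V)

theorem MDomIn.mdom {S : Set V} {x y : V} (h : T.MDomIn S x y) : T.MDom x y :=
  let ⟨c, hc⟩ := h
  ⟨c, Relation.TransGen.mono (fun _ _ hab => ⟨hab.2.2.1, hab.2.2.2⟩) _ _ hc⟩

theorem eq_of_forall_mdomIn_pathSet {σ : Equiv.Perm V}
    (hreach : ∀ v w : V, ∃ n : ℕ, (⇑σ)^[n] v = w)
    (hpred : ∀ v : V, ¬ T.MDom v (σ.symm v)) {x y z : V} (hz : z ∈ PathSet σ x y)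
    (hdom : ∀ w ∈ PathSet σ x y, w ≠ z → T.MDomIn (PathSet σ x y) z w) : z = x := by
  by_contra hzx
  exact hpred z (hdom _ (symm_mem_pathSet hz hzx)
    (symm_apply_ne_self_of_reachable hreach hzx)).mdom

end CTournament

theorem dominates_within_subpath_general {V : Type*} (T : CTournament V)
    (h : T.MinimalCex) (σ : Equiv.Perm V)
    (hσ : T.IsHamCycle σ) (hprop : T.HamDomProp σ) :
    ∀ x y : V, y ≠ x → y ≠ σ.symm x →
      T.MDomIn (CTournament.PathSet σ x y) x y := by
  intro x y hyx hyx'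
  obtain ⟨m, hm⟩ := hσ.2 x y
  have hproper : CTournament.PathSet σ x y ≠ Set.univ := fun huniv =>
    CTournament.symm_notMem_pathSet hm hyx' (huniv ▸ Set.mem_univ _)
  obtain ⟨z, hz, hdom⟩ := h.2.2 _ ⟨x, CTournament.self_mem_pathSet⟩ hproper
  obtain rfl := T.eq_of_forall_mdomIn_pathSet hσ.2 hprop.2 hz hdom
  exact hdom y (CTournament.mem_pathSet_of_iterate_eq hm) hyx

/-- In a minimal counterexample with Hamilton cycle `σ`, every
vertex `x` monochromatically dominates every vertex `y ≠ x, x⁻` within the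
subtournament induced on the vertex set of the subpath `xCy`. -/
theorem dominates_within_subpath {V : Type*} [Fintype V] (T : CTournament V)
    (h : T.MinimalCex) (σ : Equiv.Perm V)
    (hσ : T.IsHamCycle σ) (hprop : T.HamDomProp σ) :
    ∀ x y : V, y ≠ x → y ≠ σ.symm x →
      T.MDomIn (CTournament.PathSet σ x y) x y :=
  dominates_within_subpath_general T h σ hσ hprop
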